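/- arXiv:2006.16986 — 7 statements merged into one kernel-verified Lean document; each statement's English description precedes it below -/
import Mathlib

section
/- Let f : ℝⁿ → ℝ be differentiable with gradient ∇f, and suppose there are constants 0 < μ ≤ L such that (μ/2)‖x − y‖² ≤ f(x) − f(y) − ⟨∇f(y), x − y⟩ ≤ (L/2)‖x − y‖² for all x, y ∈ ℝⁿ. Let x* be a global minimizer of f and set β = (√L − √μ)/(√L + √μ). Given x⁰ ∈ ℝⁿ, define sequences (xᵏ) and (yᵏ) by y⁰ = x⁰ and, for every k ≥ 1, yᵏ = xᵏ⁻¹ − (1/L)∇f(xᵏ⁻¹) and xᵏ = yᵏ + β(yᵏ − yᵏ⁻¹). Then for every k ≥ 0, the gradient-step iterates satisfy f(yᵏ) − f(x*) ≤ (1 − √(μ/L))ᵏ · ( f(x⁰) − f(x*) + (μ/2)‖x⁰ − x*‖² ). -/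
open RealInnerProductSpace

/-!
With `τ = √(μ/L)` and the extrapolated point `zₖ = xₖ + τ⁻¹ (xₖ - yₖ)`, the momentum
`β = (1 - τ)/(1 + τ)` is exactly what makes `zₖ₊₁ = (1 - τ) zₖ + τ xₖ - (τ/μ) ∇f(xₖ)`.
The Lyapunov function `f(yₖ) - f(x⋆) + μ/2 ‖zₖ - x⋆‖²` then contracts by `1 - τ` at every
step: expanding the square, the gradient terms are controlled by strong convexity at `x⋆`
and at `yₖ`, and the remaining `‖∇f(xₖ)‖²/(2L)` is paid for by the descent lemma of the
gradient step. Since `z₀ = x₀`, its initial value is `f(x₀) - f(x⋆) + μ/2 ‖x₀ - x⋆‖²`.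
-/

lemma sqrt_sub_sqrt_div_sqrt_add_sqrt_eq {μ L : ℝ} (hμ : 0 ≤ μ) (hL : 0 < L) :
    (√L - √μ) / (√L + √μ) = (1 - √(μ / L)) / (1 + √(μ / L)) := by
  have hsL : 0 < √L := Real.sqrt_pos.2 hL
  rw [Real.sqrt_div hμ, div_eq_div_iff (by positivity) (by positivity)]
  field_simp

section

variable {E : Type*} [NormedAddCommGroup E]

noncomputable def nesterovLyapunov (f : E → ℝ) (μ : ℝ) (xstar y z : E) : ℝ :=
  f y - f xstar + μ / 2 * ‖z - xstar‖ ^ 2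

lemma sub_le_nesterovLyapunov {f : E → ℝ} {μ : ℝ} (hμ : 0 ≤ μ) (xstar y z : E) :
    f y - f xstar ≤ nesterovLyapunov f μ xstar y z :=
  le_add_of_nonneg_right (by positivity)

variable [InnerProductSpace ℝ E]

lemma norm_smul_add_smul_sq_le {t : ℝ} (ht₀ : 0 ≤ t) (ht₁ : t ≤ 1) (u v : E) :
    ‖(1 - t) • u + t • v‖ ^ 2 ≤ (1 - t) * ‖u‖ ^ 2 + t * ‖v‖ ^ 2 := by
  have h1t : 0 ≤ 1 - t := sub_nonneg.2 ht₁
  have hexp : ‖(1 - t) • u + t • v‖ ^ 2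
      = (1 - t) * ‖u‖ ^ 2 + t * ‖v‖ ^ 2 - (1 - t) * t * ‖u - v‖ ^ 2 := by
    rw [norm_add_sq_real, norm_sub_sq_real, norm_smul, norm_smul, real_inner_smul_left,
      real_inner_smul_right, Real.norm_of_nonneg h1t, Real.norm_of_nonneg ht₀]
    ring
  linarith [mul_nonneg (mul_nonneg h1t ht₀) (sq_nonneg ‖u - v‖)]

lemma apply_gradient_step_le {f : E → ℝ} {f' : E → E} {L : ℝ} (hL : 0 < L)
    (hup : ∀ x y, f x - f y - ⟪f' y, x - y⟫ ≤ L / 2 * ‖x - y‖ ^ 2) (x : E) :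
    f (x - (1 / L) • f' x) ≤ f x - 1 / (2 * L) * ‖f' x‖ ^ 2 := by
  have h := hup (x - (1 / L) • f' x) x
  rw [sub_sub_cancel_left, inner_neg_right, real_inner_smul_right, real_inner_self_eq_norm_sq,
    norm_neg, norm_smul, Real.norm_of_nonneg (by positivity), mul_pow] at h
  have hcoef : L / 2 * ((1 / L) ^ 2 * ‖f' x‖ ^ 2) - 1 / L * ‖f' x‖ ^ 2
      = -(1 / (2 * L) * ‖f' x‖ ^ 2) := by
    field_simp
    ring
  linarith

lemma nesterovLyapunov_step_le {f : E → ℝ} {f' : E → E} {μ L τ : ℝ} (hL : 0 < L)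
    (hτ₀ : 0 < τ) (hτ₁ : τ ≤ 1) (hμ : μ = τ ^ 2 * L)
    (hlow : ∀ x y, μ / 2 * ‖x - y‖ ^ 2 ≤ f x - f y - ⟪f' y, x - y⟫)
    (hup : ∀ x y, f x - f y - ⟪f' y, x - y⟫ ≤ L / 2 * ‖x - y‖ ^ 2)
    {xstar x y z : E} (hz : τ • (z - x) = x - y) :
    nesterovLyapunov f μ xstar (x - (1 / L) • f' x) ((1 - τ) • z + τ • x - (τ / μ) • f' x)
      ≤ (1 - τ) * nesterovLyapunov f μ xstar y z := by
  have hdescent := apply_gradient_step_le hL hup x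
  have hconv_xstar := norm_sub_rev xstar x ▸ hlow xstar x
  have hconv_y := hlow y x
  have hnorm_a := norm_smul_add_smul_sq_le hτ₀.le hτ₁ (z - xstar) (x - xstar)
  set g := f' x
  set a := (1 - τ) • (z - xstar) + τ • (x - xstar)
  have hsmul_a : τ • a = -((1 - τ) • (y - x) + τ • (xstar - x)) := by
    linear_combination (norm := module) (1 - τ) • hz
  have hinner_a : τ * ⟪a, g⟫ = -((1 - τ) * ⟪g, y - x⟫ + τ * ⟪g, xstar - x⟫) := by
    rw [← real_inner_smul_left, hsmul_a, inner_neg_left, inner_add_left, real_inner_smul_left,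
      real_inner_smul_left, real_inner_comm, real_inner_comm g]
  have hnext : (1 - τ) • z + τ • x - (τ / μ) • g - xstar = a - (τ / μ) • g := by module
  have hnorm_next : μ / 2 * ‖a - (τ / μ) • g‖ ^ 2
      = μ / 2 * ‖a‖ ^ 2 - τ * ⟪a, g⟫ + 1 / (2 * L) * ‖g‖ ^ 2 := by
    rw [norm_sub_sq_real, real_inner_smul_right, norm_smul, Real.norm_eq_abs, mul_pow, sq_abs,
      hμ]
    field_simp
  unfold nesterovLyapunov
  rw [hnext, hnorm_next, hinner_a]
  have hμ₀ : 0 ≤ μ := hμ ▸ by positivity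
  have h1τ : 0 ≤ 1 - τ := sub_nonneg.2 hτ₁
  linarith [mul_le_mul_of_nonneg_left hnorm_a (by positivity : 0 ≤ μ / 2),
    mul_le_mul_of_nonneg_left hconv_xstar hτ₀.le, mul_le_mul_of_nonneg_left hconv_y h1τ,
    mul_nonneg h1τ (by positivity : 0 ≤ μ / 2 * ‖y - x‖ ^ 2)]

lemma nesterov_extrapolation_succ {μ L τ β : ℝ} (hL : 0 < L) (hτ : 0 < τ)
    (hμ : μ = τ ^ 2 * L) (hβ : β = (1 - τ) / (1 + τ)) {x₀ y₀ x₁ y₁ g : E}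
    (hy : y₁ = x₀ - (1 / L) • g) (hx : x₁ = y₁ + β • (y₁ - y₀)) :
    x₁ + τ⁻¹ • (x₁ - y₁) = (1 - τ) • (x₀ + τ⁻¹ • (x₀ - y₀)) + τ • x₀ - (τ / μ) • g := by
  subst hx hy hμ hβ
  match_scalars <;> field_simp <;> ring

theorem nesterovLyapunov_le_pow {f : E → ℝ} {f' : E → E} {μ L τ β : ℝ} (hL : 0 < L)
    (hτ₀ : 0 < τ) (hτ₁ : τ ≤ 1) (hμ : μ = τ ^ 2 * L) (hβ : β = (1 - τ) / (1 + τ))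
    (hlow : ∀ x y, μ / 2 * ‖x - y‖ ^ 2 ≤ f x - f y - ⟪f' y, x - y⟫)
    (hup : ∀ x y, f x - f y - ⟪f' y, x - y⟫ ≤ L / 2 * ‖x - y‖ ^ 2)
    (xstar : E) {x y : ℕ → E} (hy : ∀ k, y (k + 1) = x k - (1 / L) • f' (x k))
    (hx : ∀ k, x (k + 1) = y (k + 1) + β • (y (k + 1) - y k)) (k : ℕ) :
    nesterovLyapunov f μ xstar (y k) (x k + τ⁻¹ • (x k - y k))
      ≤ (1 - τ) ^ k * nesterovLyapunov f μ xstar (y 0) (x 0 + τ⁻¹ • (x 0 - y 0)) := by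
  refine le_geom (u := fun k ↦ nesterovLyapunov f μ xstar (y k) (x k + τ⁻¹ • (x k - y k)))
    (sub_nonneg.2 hτ₁) k fun j _ ↦ ?_
  have hz : τ • (x j + τ⁻¹ • (x j - y j) - x j) = x j - y j := by
    rw [add_sub_cancel_left, smul_inv_smul₀ hτ₀.ne']
  rw [nesterov_extrapolation_succ hL hτ₀ hμ hβ (hy j) (hx j), hy j]
  exact nesterovLyapunov_step_le hL hτ₀ hτ₁ hμ hlow hup hz

end

theorem nesterov_acceleration_convergence_general
    (n : ℕ) (f : EuclideanSpace ℝ (Fin n) → ℝ)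
    (f' : EuclideanSpace ℝ (Fin n) → EuclideanSpace ℝ (Fin n))
    (μ L : ℝ) (hμ : 0 < μ) (hμL : μ ≤ L)
    (hlow : ∀ x y : EuclideanSpace ℝ (Fin n),
      μ / 2 * ‖x - y‖ ^ 2 ≤ f x - f y - ⟪f' y, x - y⟫)
    (hup : ∀ x y : EuclideanSpace ℝ (Fin n),
      f x - f y - ⟪f' y, x - y⟫ ≤ L / 2 * ‖x - y‖ ^ 2)
    (xstar : EuclideanSpace ℝ (Fin n))
    (β : ℝ) (hβ : β = (Real.sqrt L - Real.sqrt μ) / (Real.sqrt L + Real.sqrt μ))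
    (x y : ℕ → EuclideanSpace ℝ (Fin n))
    (hy0 : y 0 = x 0)
    (hy : ∀ k : ℕ, y (k + 1) = x k - (1 / L) • f' (x k))
    (hx : ∀ k : ℕ, x (k + 1) = y (k + 1) + β • (y (k + 1) - y k)) :
    ∀ k : ℕ, f (y k) - f xstar ≤
      (1 - Real.sqrt (μ / L)) ^ k *
        (f (x 0) - f xstar + μ / 2 * ‖x 0 - xstar‖ ^ 2) := by
  intro k
  have hL : 0 < L := hμ.trans_le hμL
  have hτ₀ : 0 < √(μ / L) := Real.sqrt_pos.2 (div_pos hμ hL)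
  have hτ₁ : √(μ / L) ≤ 1 := Real.sqrt_le_one.2 ((div_le_one hL).2 hμL)
  have hμ_eq : μ = √(μ / L) ^ 2 * L := by
    rw [Real.sq_sqrt (div_pos hμ hL).le, div_mul_cancel₀ μ hL.ne']
  have hβ_eq := hβ.trans (sqrt_sub_sqrt_div_sqrt_add_sqrt_eq hμ.le hL)
  calc f (y k) - f xstar
      ≤ nesterovLyapunov f μ xstar (y k) (x k + (√(μ / L))⁻¹ • (x k - y k)) :=
        sub_le_nesterovLyapunov hμ.le _ _ _
    _ ≤ (1 - √(μ / L)) ^ k *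
        nesterovLyapunov f μ xstar (y 0) (x 0 + (√(μ / L))⁻¹ • (x 0 - y 0)) :=
        nesterovLyapunov_le_pow hL hτ₀ hτ₁ hμ_eq hβ_eq hlow hup xstar hy hx k
    _ = _ := by simp [nesterovLyapunov, hy0]

/-- Nesterov's constant-momentum accelerated gradient method on a μ-strongly convex,
L-smooth function: convergence estimate for the gradient-step iterates `y k`. -/
theorem nesterov_acceleration_convergence
    (n : ℕ) (f : EuclideanSpace ℝ (Fin n) → ℝ)
    (f' : EuclideanSpace ℝ (Fin n) → EuclideanSpace ℝ (Fin n))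
    (hf : ∀ x, HasGradientAt f (f' x) x)
    (μ L : ℝ) (hμ : 0 < μ) (hμL : μ ≤ L)
    (hlow : ∀ x y : EuclideanSpace ℝ (Fin n),
      μ / 2 * ‖x - y‖ ^ 2 ≤ f x - f y - ⟪f' y, x - y⟫)
    (hup : ∀ x y : EuclideanSpace ℝ (Fin n),
      f x - f y - ⟪f' y, x - y⟫ ≤ L / 2 * ‖x - y‖ ^ 2)
    (xstar : EuclideanSpace ℝ (Fin n)) (hxstar : ∀ z, f xstar ≤ f z)
    (β : ℝ) (hβ : β = (Real.sqrt L - Real.sqrt μ) / (Real.sqrt L + Real.sqrt μ))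
    (x y : ℕ → EuclideanSpace ℝ (Fin n))
    (hy0 : y 0 = x 0)
    (hy : ∀ k : ℕ, y (k + 1) = x k - (1 / L) • f' (x k))
    (hx : ∀ k : ℕ, x (k + 1) = y (k + 1) + β • (y (k + 1) - y k)) :
    ∀ k : ℕ, f (y k) - f xstar ≤
      (1 - Real.sqrt (μ / L)) ^ k *
        (f (x 0) - f xstar + μ / 2 * ‖x 0 - xstar‖ ^ 2) :=
  nesterov_acceleration_convergence_general n f f' μ L hμ hμL hlow hup xstar β hβ x y hy0 hy hx
end

section
/- Let A and B be real symmetric positive definite n×n matrices and b ∈ ℝⁿ, and let x* be the unique solution of A x = b. Suppose 0 < μ ≤ L are real numbers such that A − μ·B⁻¹ and L·B⁻¹ − A are positive semidefinite (equivalently, all eigenvalues of BA lie in [μ, L]), and set β = (√L − √μ)/(√L + √μ) and κ = L/μ. Given x⁰ ∈ ℝⁿ, define sequences by y⁰ = x⁰ and, for k ≥ 1, yᵏ = xᵏ⁻¹ + (1/L)·B(b − A xᵏ⁻¹) and xᵏ = yᵏ + β(yᵏ − yᵏ⁻¹). Then for every k ≥ 0, ‖yᵏ − x*‖_A² ≤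 2·(1 − 1/√κ)ᵏ · ‖x⁰ − x*‖_A². -/
/-!
With `q = √(μ/L)` and the auxiliary sequence `z k = ((1 + q) x k - y k) / q`, the potential
`½ ‖y k - x*‖²_A + (μ/2) ‖z k - x*‖²_{B⁻¹}` contracts by the factor `1 - q` at every step. In
the `B⁻¹`-geometry, `B A (x k - x*)` is the gradient of `½ ‖· - x*‖²_A`, so `y (k+1)` is a gradient
step (descent lemma from `A ≤ L B⁻¹`) and `z (k+1)` a convex combination of `z k` and `x k` followed
by a step of length `1/(qL)` (convexity of the `B⁻¹`-norm, strong convexity from `μ B⁻¹ ≤ A`). The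
initial potential is at most `‖x 0 - x*‖²_A`, and `‖y k - x*‖²_A` is at most twice the potential.
-/

open Matrix

namespace Matrix

variable {ι R : Type*} [Fintype ι] [CommRing R]

lemma IsSymm.dotProduct_mulVec_comm {M : Matrix ι ι R} (hM : M.IsSymm) (v w : ι → R) :
    v ⬝ᵥ (M *ᵥ w) = w ⬝ᵥ (M *ᵥ v) := by
  rw [← dotProduct_transpose_mulVec, hM.eq]

lemma IsSymm.dotProduct_mulVec_smul_add_smul {M : Matrix ι ι R} (hM : M.IsSymm) (a c : R)
    (v w : ι → R) :
    (a • v + c • w) ⬝ᵥ (M *ᵥ (a • v + c • w)) =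
      a ^ 2 * (v ⬝ᵥ (M *ᵥ v)) + 2 * a * c * (v ⬝ᵥ (M *ᵥ w)) + c ^ 2 * (w ⬝ᵥ (M *ᵥ w)) := by
  simp only [mulVec_add, mulVec_smul, dotProduct_add, add_dotProduct, dotProduct_smul,
    smul_dotProduct, smul_eq_mul]
  linear_combination (a * c) * hM.dotProduct_mulVec_comm w v

lemma PosSemidef.dotProduct_mulVec_self_nonneg {M : Matrix ι ι ℝ} (hM : M.PosSemidef)
    (v : ι → ℝ) : 0 ≤ v ⬝ᵥ (M *ᵥ v) := by
  simpa using hM.dotProduct_mulVec_nonneg v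

lemma PosSemidef.dotProduct_mulVec_le_of_sub {M N : Matrix ι ι ℝ} (h : (M - N).PosSemidef)
    (v : ι → ℝ) : v ⬝ᵥ (N *ᵥ v) ≤ v ⬝ᵥ (M *ᵥ v) := by
  simpa [sub_mulVec] using h.dotProduct_mulVec_self_nonneg v

lemma PosSemidef.dotProduct_mulVec_smul_add_smul_le {M : Matrix ι ι ℝ} (hM : M.PosSemidef)
    {t : ℝ} (ht₀ : 0 ≤ t) (ht₁ : t ≤ 1) (v w : ι → ℝ) :
    ((1 - t) • v + t • w) ⬝ᵥ (M *ᵥ ((1 - t) • v + t • w)) ≤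
      (1 - t) * (v ⬝ᵥ (M *ᵥ v)) + t * (w ⬝ᵥ (M *ᵥ w)) := by
  have hsymm : M.IsSymm := isHermitian_iff_isSymm.mp hM.isHermitian
  have hvw := hM.dotProduct_mulVec_self_nonneg ((1 : ℝ) • v + (-1 : ℝ) • w)
  rw [hsymm.dotProduct_mulVec_smul_add_smul] at hvw ⊢
  linear_combination t * (1 - t) * hvw

lemma inv_mulVec_mulVec [DecidableEq ι] {B : Matrix ι ι R} (hB : IsUnit B.det) (v : ι → R) :
    B⁻¹ *ᵥ (B *ᵥ v) = v := by
  rw [mulVec_mulVec, nonsing_inv_mul B hB, one_mulVec]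

end Matrix

section Step

variable {ι : Type*} [Fintype ι] [DecidableEq ι] {A B : Matrix ι ι ℝ}

lemma dotProduct_mulVec_gradient_step_le (hA : A.IsSymm) (hB : IsUnit B.det) {L : ℝ}
    (hL : 0 < L) (hAL : (L • B⁻¹ - A).PosSemidef) (u : ι → ℝ) :
    (u - L⁻¹ • (B *ᵥ (A *ᵥ u))) ⬝ᵥ (A *ᵥ (u - L⁻¹ • (B *ᵥ (A *ᵥ u)))) ≤
      u ⬝ᵥ (A *ᵥ u) - L⁻¹ * ((B *ᵥ (A *ᵥ u)) ⬝ᵥ (A *ᵥ u)) := by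
  set g := B *ᵥ (A *ᵥ u)
  have hg : g ⬝ᵥ (A *ᵥ g) ≤ L * (g ⬝ᵥ (A *ᵥ u)) := by
    have h := hAL.dotProduct_mulVec_le_of_sub g
    rwa [smul_mulVec, dotProduct_smul, smul_eq_mul,
      (inv_mulVec_mulVec hB (A *ᵥ u) : B⁻¹ *ᵥ g = A *ᵥ u)] at h
  rw [show u - L⁻¹ • g = (1 : ℝ) • u + (-L⁻¹) • g by module,
    hA.dotProduct_mulVec_smul_add_smul, hA.dotProduct_mulVec_comm u g]
  linear_combination L⁻¹ ^ 2 * hg + L⁻¹ * (g ⬝ᵥ (A *ᵥ u)) * mul_inv_cancel₀ hL.ne'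

lemma dotProduct_inv_mulVec_extrapolation_le (hB : B.PosDef) {q : ℝ} (hq₀ : 0 ≤ q)
    (hq₁ : q ≤ 1) (c : ℝ) (u w : ι → ℝ) :
    ((1 - q) • w + q • u - c • (B *ᵥ (A *ᵥ u))) ⬝ᵥ
        (B⁻¹ *ᵥ ((1 - q) • w + q • u - c • (B *ᵥ (A *ᵥ u)))) ≤
      (1 - q) * (w ⬝ᵥ (B⁻¹ *ᵥ w)) + q * (u ⬝ᵥ (B⁻¹ *ᵥ u))
        - 2 * c * ((1 - q) * (w ⬝ᵥ (A *ᵥ u)) + q * (u ⬝ᵥ (A *ᵥ u)))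
        + c ^ 2 * ((B *ᵥ (A *ᵥ u)) ⬝ᵥ (A *ᵥ u)) := by
  have hC := hB.inv.posSemidef
  have hCsymm : B⁻¹.IsSymm := isHermitian_iff_isSymm.mp hC.isHermitian
  have hunit : IsUnit B.det := isUnit_iff_ne_zero.mpr hB.det_pos.ne'
  set p := (1 - q) • w + q • u
  set g := B *ᵥ (A *ᵥ u)
  have hCg : B⁻¹ *ᵥ g = A *ᵥ u := inv_mulVec_mulVec hunit _
  have hpg : p ⬝ᵥ (A *ᵥ u) = (1 - q) * (w ⬝ᵥ (A *ᵥ u)) + q * (u ⬝ᵥ (A *ᵥ u)) := by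
    simp only [p, add_dotProduct, smul_dotProduct, smul_eq_mul]
  rw [show p - c • g = (1 : ℝ) • p + (-c) • g by module,
    hCsymm.dotProduct_mulVec_smul_add_smul, hCg, ← hpg]
  linear_combination hC.dotProduct_mulVec_smul_add_smul_le hq₀ hq₁ w u

noncomputable def nesterovPotential (A B : Matrix ι ι ℝ) (μ : ℝ) (e w : ι → ℝ) : ℝ :=
  (1 / 2) * (e ⬝ᵥ (A *ᵥ e)) + (μ / 2) * (w ⬝ᵥ (B⁻¹ *ᵥ w))

lemma nesterovPotential_step_le (hA : A.PosSemidef) (hB : B.PosDef) {q L : ℝ} (hq₀ : 0 < q)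
    (hq₁ : q ≤ 1) (hL : 0 < L) (hlow : (A - (q ^ 2 * L) • B⁻¹).PosSemidef)
    (hup : (L • B⁻¹ - A).PosSemidef) (u w : ι → ℝ) :
    nesterovPotential A B (q ^ 2 * L) (u - L⁻¹ • (B *ᵥ (A *ᵥ u)))
        ((1 - q) • w + q • u - (q * L)⁻¹ • (B *ᵥ (A *ᵥ u))) ≤
      (1 - q) * nesterovPotential A B (q ^ 2 * L) ((1 + q) • u - q • w) w := by
  have hAsymm : A.IsSymm := isHermitian_iff_isSymm.mp hA.isHermitian
  have hdescent := dotProduct_mulVec_gradient_step_le hAsymm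
    (isUnit_iff_ne_zero.mpr hB.det_pos.ne') hL hup u
  have hextra := dotProduct_inv_mulVec_extrapolation_le (A := A) hB hq₀.le hq₁ (q * L)⁻¹ u w
  have hμ := hlow.dotProduct_mulVec_le_of_sub u
  have huw := hA.dotProduct_mulVec_self_nonneg ((1 : ℝ) • u + (-1 : ℝ) • w)
  rw [hAsymm.dotProduct_mulVec_smul_add_smul] at huw
  rw [smul_mulVec, dotProduct_smul, smul_eq_mul] at hμ
  unfold nesterovPotential
  rw [show (1 + q) • u - q • w = (1 + q) • u + (-q) • w by module,
    hAsymm.dotProduct_mulVec_smul_add_smul]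
  rw [hAsymm.dotProduct_mulVec_comm w u] at hextra
  have hinv : L⁻¹ = q * (q * L)⁻¹ := by field_simp
  replace hdescent := hdescent.trans_eq (congrArg (_ - · * _) hinv)
  have ha : q * L * (q * L)⁻¹ = 1 := mul_inv_cancel₀ (mul_pos hq₀ hL).ne'
  -- Since `μ = q²L`, the gradient terms cancel, and what is left over is `q²(1-q)/2 ‖u - w‖²_A`.
  linear_combination (1 / 2) * hdescent + (q ^ 2 * L / 2) * hextra + (q / 2) * hμ
    + (q ^ 2 * (1 - q) / 2) * huw + ((q * L)⁻¹ * q / 2 * ((B *ᵥ (A *ᵥ u)) ⬝ᵥ (A *ᵥ u))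
      - q * (1 - q) * (u ⬝ᵥ (A *ᵥ w)) - q ^ 2 * (u ⬝ᵥ (A *ᵥ u))) * ha

lemma dotProduct_mulVec_le_two_mul_nesterovPotential (hB : B.PosDef) {μ : ℝ} (hμ : 0 ≤ μ)
    (e w : ι → ℝ) : e ⬝ᵥ (A *ᵥ e) ≤ 2 * nesterovPotential A B μ e w := by
  have := mul_nonneg hμ (hB.inv.posSemidef.dotProduct_mulVec_self_nonneg w)
  unfold nesterovPotential
  linarith

lemma nesterovPotential_self_le {μ : ℝ} (hlow : (A - μ • B⁻¹).PosSemidef) (e : ι → ℝ) :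
    nesterovPotential A B μ e e ≤ e ⬝ᵥ (A *ᵥ e) := by
  have := hlow.dotProduct_mulVec_le_of_sub e
  rw [smul_mulVec, dotProduct_smul, smul_eq_mul] at this
  unfold nesterovPotential
  linarith

end Step

section Iteration

variable {ι : Type*} {q : ℝ} {x y : ℕ → ι → ℝ}

/-- The sequence `z` for which `x k` is the weighted average `(y k + q • z k) / (1 + q)`. -/
noncomputable def nesterovAux (q : ℝ) (x y : ℕ → ι → ℝ) (k : ℕ) : ι → ℝ :=
  q⁻¹ • ((1 + q) • x k - y k)

lemma nesterovAux_zero (hq : q ≠ 0) (hy₀ : y 0 = x 0) : nesterovAux q x y 0 = x 0 := by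
  rw [nesterovAux, hy₀]
  match_scalars
  field_simp
  ring

lemma sub_eq_smul_sub_nesterovAux (hq : q ≠ 0) (xstar : ι → ℝ) (k : ℕ) :
    y k - xstar = (1 + q) • (x k - xstar) - q • (nesterovAux q x y k - xstar) := by
  rw [nesterovAux]
  match_scalars <;> field_simp <;> ring

lemma nesterovAux_succ_sub (hq : q ≠ 0) (hq' : 1 + q ≠ 0) {L : ℝ} {xstar g : ι → ℝ} {k : ℕ}
    (hx : x (k + 1) = y (k + 1) + ((1 - q) / (1 + q)) • (y (k + 1) - y k))
    (hy : y (k + 1) - xstar = (x k - xstar) - L⁻¹ • g) :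
    nesterovAux q x y (k + 1) - xstar =
      (1 - q) • (nesterovAux q x y k - xstar) + q • (x k - xstar) - (q * L)⁻¹ • g := by
  rw [sub_eq_iff_eq_add] at hy
  rw [nesterovAux, nesterovAux, hx, hy]
  match_scalars <;> field_simp <;> ring

lemma sub_eq_of_preconditioned_step [Fintype ι] {A B : Matrix ι ι ℝ} {b xstar : ι → ℝ}
    (hxstar : A *ᵥ xstar = b) {L : ℝ} {k : ℕ} (hy : y (k + 1) = x k + (1 / L) • (B *ᵥ (b - A *ᵥ x k))) :
    y (k + 1) - xstar = (x k - xstar) - L⁻¹ • (B *ᵥ (A *ᵥ (x k - xstar))) := by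
  rw [hy, ← hxstar, ← mulVec_sub, ← neg_sub (x k), mulVec_neg, mulVec_neg]
  module

end Iteration

lemma exists_nesterov_rate {μ L : ℝ} (hμ : 0 < μ) (hμL : μ ≤ L) :
    ∃ q : ℝ, 0 < q ∧ q ≤ 1 ∧ μ = q ^ 2 * L ∧
      (√L - √μ) / (√L + √μ) = (1 - q) / (1 + q) ∧ 1 / √(L / μ) = q := by
  have hL : 0 < L := hμ.trans_le hμL
  have hsL : 0 < √L := Real.sqrt_pos.mpr hL
  have hsμ : 0 < √μ := Real.sqrt_pos.mpr hμ
  refine ⟨√μ / √L, div_pos hsμ hsL, (div_le_one hsL).mpr (Real.sqrt_le_sqrt hμL), ?_, ?_, ?_⟩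
  · rw [div_pow, Real.sq_sqrt hμ.le, Real.sq_sqrt hL.le]
    field_simp
  · field_simp
  · rw [Real.sqrt_div hL.le, one_div_div]

/-- Nesterov acceleration applied to the preconditioned linear system `A x = b` with SPD
preconditioner `B`: A-norm convergence estimate for the gradient-step iterates `y k`. -/
theorem nesterov_preconditioned_linear_convergence
    (n : ℕ) (A B : Matrix (Fin n) (Fin n) ℝ) (hA : A.PosDef) (hB : B.PosDef)
    (b xstar : Fin n → ℝ) (hxstar : A *ᵥ xstar = b)
    (μ L : ℝ) (hμ : 0 < μ) (hμL : μ ≤ L)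
    (h1 : (A - μ • B⁻¹).PosSemidef) (h2 : (L • B⁻¹ - A).PosSemidef)
    (β κ : ℝ) (hβ : β = (Real.sqrt L - Real.sqrt μ) / (Real.sqrt L + Real.sqrt μ))
    (hκ : κ = L / μ)
    (x y : ℕ → Fin n → ℝ)
    (hy0 : y 0 = x 0)
    (hy : ∀ k : ℕ, y (k + 1) = x k + (1 / L) • (B *ᵥ (b - A *ᵥ x k)))
    (hx : ∀ k : ℕ, x (k + 1) = y (k + 1) + β • (y (k + 1) - y k)) :
    ∀ k : ℕ, (y k - xstar) ⬝ᵥ (A *ᵥ (y k - xstar)) ≤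
      2 * (1 - 1 / Real.sqrt κ) ^ k * ((x 0 - xstar) ⬝ᵥ (A *ᵥ (x 0 - xstar))) := by
  have hL : 0 < L := hμ.trans_le hμL
  obtain ⟨q, hq₀, hq₁, hμq, hβq, hκq⟩ := exists_nesterov_rate hμ hμL
  subst hβ hκ μ
  rw [hβq] at hx
  rw [hκq]
  set Φ : ℕ → ℝ := fun k ↦
    nesterovPotential A B (q ^ 2 * L) (y k - xstar) (nesterovAux q x y k - xstar)
  have hstep (k : ℕ) : Φ (k + 1) ≤ (1 - q) * Φ k := by
    have hyk := sub_eq_of_preconditioned_step hxstar (hy k)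
    have := nesterovPotential_step_le hA.posSemidef hB hq₀ hq₁ hL h1 h2 (x k - xstar)
      (nesterovAux q x y k - xstar)
    rwa [← hyk, ← nesterovAux_succ_sub hq₀.ne' (by positivity) (hx k) hyk,
      ← sub_eq_smul_sub_nesterovAux hq₀.ne'] at this
  intro k
  calc (y k - xstar) ⬝ᵥ (A *ᵥ (y k - xstar)) ≤ 2 * Φ k :=
        dotProduct_mulVec_le_two_mul_nesterovPotential hB (by positivity) _ _
    _ ≤ 2 * ((1 - q) ^ k * Φ 0) := by
        gcongr
        exact le_geom (sub_nonneg.mpr hq₁) k fun j _ ↦ hstep j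
    _ ≤ 2 * ((1 - q) ^ k * ((x 0 - xstar) ⬝ᵥ (A *ᵥ (x 0 - xstar)))) := by
        gcongr
        simpa only [Φ, hy0, nesterovAux_zero hq₀.ne' hy0] using nesterovPotential_self_le h1 _
    _ = 2 * (1 - q) ^ k * ((x 0 - xstar) ⬝ᵥ (A *ᵥ (x 0 - xstar))) := (mul_assoc _ _ _).symm
end

section
/- Let L > 0, 0 ≤ β < 1, and let x be a real number with 0 < x ≤ L. Then every real sequence (q_k)_{k≥0} satisfying the recurrence q_{k+1} = q_k + (1/L)(1 − x·q_k) + β(1 − x/L)(q_k − q_{k−1}) for all k ≥ 1 (with arbitrary initial values q₀, q₁) converges to 1/x as k → ∞. -/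
/-!
The residuals `u k = 1 - x * q k` satisfy `u (k + 2) = (1 + β) r u (k + 1) - β r u k` with
`r = 1 - x / L ∈ [0, 1)`. Both roots of the characteristic polynomial `z ^ 2 - (1 + β) r z + β r`
lie in the open unit disc: complex roots have modulus `√(β r)`, and real roots lie in `[0, 1)`
because the polynomial is positive at `1` and its roots sum to less than `2`. Factoring the
recurrence through the two roots `l₁, l₂` gives `u (k + 1) - l₂ u k = l₁ ^ k (u 1 - l₂ u 0)`, and
a geometric recursion perturbed by a geometric term decays like `k ρ ^ k`.
-/

open Filter Topology

section GeometricDecay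

variable {𝕜 : Type*} [NormedField 𝕜]

theorem norm_le_of_succ_eq_mul_add_pow_mul {ρ : ℝ} (hρ : 0 < ρ) {a b c : 𝕜}
    (ha : ‖a‖ ≤ ρ) (hb : ‖b‖ ≤ ρ) {U : ℕ → 𝕜} (hU : ∀ k, U (k + 1) = a * U k + b ^ k * c) :
    ∀ k : ℕ, ‖U k‖ ≤ ρ ^ k * (‖U 0‖ + k * (‖c‖ / ρ)) := by
  intro k
  induction k with
  | zero => simp
  | succ n ih =>
    calc ‖U (n + 1)‖ ≤ ‖a‖ * ‖U n‖ + ‖b‖ ^ n * ‖c‖ := by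
          rw [hU n, ← norm_mul, ← norm_pow, ← norm_mul]
          exact norm_add_le _ _
      _ ≤ ρ * (ρ ^ n * (‖U 0‖ + n * (‖c‖ / ρ))) + ρ ^ n * ‖c‖ := by
          gcongr
      _ = ρ ^ (n + 1) * (‖U 0‖ + (n + 1 : ℕ) * (‖c‖ / ρ)) := by
          field_simp
          push_cast
          ring

theorem tendsto_zero_of_succ_eq_mul_add_pow_mul {a b c : 𝕜} (ha : ‖a‖ < 1) (hb : ‖b‖ < 1)
    {U : ℕ → 𝕜} (hU : ∀ k, U (k + 1) = a * U k + b ^ k * c) :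
    Tendsto U atTop (𝓝 0) := by
  obtain ⟨ρ, hρ, hρ1⟩ := exists_between (max_lt ha hb)
  have hρ0 : 0 < ρ := (norm_nonneg a).trans_lt ((le_max_left _ _).trans_lt hρ)
  rw [tendsto_zero_iff_norm_tendsto_zero]
  refine squeeze_zero (fun _ => norm_nonneg _)
    (norm_le_of_succ_eq_mul_add_pow_mul hρ0 ((le_max_left _ _).trans hρ.le)
      ((le_max_right _ _).trans hρ.le) hU) ?_
  have hgeom := (tendsto_pow_atTop_nhds_zero_of_lt_one hρ0.le hρ1).mul_const ‖U 0‖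
  have hpoly := (tendsto_self_mul_const_pow_of_lt_one hρ0.le hρ1).mul_const (‖c‖ / ρ)
  simpa [mul_add, mul_assoc, mul_left_comm] using hgeom.add hpoly

theorem tendsto_zero_of_add_two_eq_of_norm_lt_one {l₁ l₂ : 𝕜} (h₁ : ‖l₁‖ < 1) (h₂ : ‖l₂‖ < 1)
    {u : ℕ → 𝕜} (hu : ∀ k, u (k + 2) = (l₁ + l₂) * u (k + 1) - l₁ * l₂ * u k) :
    Tendsto u atTop (𝓝 0) := by
  have hfactor : ∀ k, u (k + 1) - l₂ * u k = l₁ ^ k * (u 1 - l₂ * u 0) := by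
    intro k
    induction k with
    | zero => simp
    | succ n ih => linear_combination hu n + l₁ * ih
  exact tendsto_zero_of_succ_eq_mul_add_pow_mul (c := u 1 - l₂ * u 0) h₂ h₁ fun k => by
    linear_combination hfactor k

end GeometricDecay

theorem Complex.norm_lt_one_of_sq_sub_mul_add_eq_zero {s p : ℝ} (hs : 0 ≤ s) (hp : 0 ≤ p)
    (hp1 : p < 1) (hsp : s < 1 + p) {z : ℂ} (hz : z ^ 2 - s * z + p = 0) : ‖z‖ < 1 := by
  have hre : z.re ^ 2 - z.im ^ 2 - s * z.re + p = 0 := by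
    simpa [sq] using congrArg Complex.re hz
  have him : z.im * (2 * z.re - s) = 0 := by
    have := congrArg Complex.im hz
    simp only [sq, Complex.sub_im, Complex.add_im, Complex.mul_im, Complex.ofReal_re,
      Complex.ofReal_im, Complex.zero_im] at this
    linear_combination this
  rw [← sq_lt_one_iff₀ (norm_nonneg z), Complex.sq_norm, Complex.normSq_apply]
  rcases mul_eq_zero.mp him with hb | ha
  · rw [hb] at hre ⊢
    have hnonneg : 0 ≤ z.re := by nlinarith
    -- `a ^ 2 - s a + p = (a - 1) (a + 1 - s) + (1 - s + p)` is positive for `a = z.re ≥ 1`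
    have hlt : z.re < 1 := by
      by_contra! h
      nlinarith [mul_nonneg (sub_nonneg.2 h) (by linarith : 0 ≤ z.re + 1 - s)]
    nlinarith
  · nlinarith

theorem Complex.exists_add_eq_mul_eq_of_norm_lt_one {s p : ℝ} (hs : 0 ≤ s) (hp : 0 ≤ p)
    (hp1 : p < 1) (hsp : s < 1 + p) :
    ∃ l₁ l₂ : ℂ, l₁ + l₂ = s ∧ l₁ * l₂ = p ∧ ‖l₁‖ < 1 ∧ ‖l₂‖ < 1 := by
  obtain ⟨d, hd⟩ := IsAlgClosed.exists_pow_nat_eq ((s : ℂ) ^ 2 - 4 * p) two_pos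
  have hsum : (s + d) / 2 + (s - d) / 2 = (s : ℂ) := by ring
  have hprod : (s + d) / 2 * ((s - d) / 2) = (p : ℂ) := by linear_combination -hd / 4
  refine ⟨_, _, hsum, hprod, ?_, ?_⟩ <;>
    refine Complex.norm_lt_one_of_sq_sub_mul_add_eq_zero hs hp hp1 hsp ?_
  · linear_combination (s + d) / 2 * hsum - hprod
  · linear_combination (s - d) / 2 * hsum - hprod

/-- The scalar three-term recurrence associated with the Nesterov acceleration method,
evaluated at a point `x ∈ (0, L]`, converges to `1/x` for any initial values. -/
theorem nesterov_q_tendsto_inv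
    (L β x : ℝ) (hL : 0 < L) (hβ0 : 0 ≤ β) (hβ1 : β < 1)
    (hx0 : 0 < x) (hxL : x ≤ L) (q : ℕ → ℝ)
    (hrec : ∀ k : ℕ, 1 ≤ k →
      q (k + 1) = q k + (1 / L) * (1 - x * q k) + β * (1 - x / L) * (q k - q (k - 1))) :
    Filter.Tendsto q Filter.atTop (nhds (1 / x)) := by
  set r := 1 - x / L with hr
  have hr0 : 0 ≤ r := by rw [hr, sub_nonneg]; exact (div_le_one hL).mpr hxL
  have hr1 : r < 1 := by rw [hr]; linarith [div_pos hx0 hL]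
  set u : ℕ → ℝ := fun k => 1 - x * q k
  have hu : ∀ k, u (k + 2) = (1 + β) * r * u (k + 1) - β * r * u k := by
    intro k
    have h := hrec (k + 1) (Nat.le_add_left 1 k)
    simp only [Nat.add_sub_cancel] at h
    linear_combination (-x) * h + (1 - x * q (k + 1)) * hr
  obtain ⟨l₁, l₂, hsum, hprod, h₁, h₂⟩ :=
    Complex.exists_add_eq_mul_eq_of_norm_lt_one (s := (1 + β) * r) (p := β * r)
      (by positivity) (by positivity) (by nlinarith) (by nlinarith)
  have hU : Tendsto (fun k => (u k : ℂ)) atTop (𝓝 0) :=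
    tendsto_zero_of_add_two_eq_of_norm_lt_one h₁ h₂ fun k => by
      rw [hsum, hprod]; exact_mod_cast hu k
  have hu0 : Tendsto u atTop (𝓝 0) := by
    simpa [Function.comp_def] using (Complex.continuous_re.tendsto 0).comp hU
  have hq : q = fun k => (1 - u k) / x := by
    funext k; field_simp [u]; ring
  rw [hq]
  simpa using (tendsto_const_nhds (x := (1 : ℝ))).sub hu0 |>.div_const x
end

section
/- Let 0 < μ ≤ L, set α = 4/(√L + √μ)² and β = ((√L − √μ)/(√L + √μ))², and let x be a real number with 0 < x ≤ L. Then every real sequence (q_k)_{k≥0} satisfying the recurrence q_{k+1} = q_k + α(1 − x·q_k) + β(q_k − q_{k−1}) for all k ≥ 1 (with arbitrary initial values q₀, q₁) converges to 1/x as k → ∞. -/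
/-!
The residuals `u k = 1 - x * q k` satisfy `u (k + 2) = t * u (k + 1) - β * u k` with
`t = 1 + β - α x`. For Polyak's parameters and `0 < x < L + μ` the Jury conditions `β < 1`,
`|t| < 1 + β` hold, so both roots `r₁, r₂` of `z ^ 2 - t z + β` lie in the open unit disc.
Then `u (n + 1) - r₂ * u n = r₁ ^ n * (u 1 - r₂ * u 0)`, whence `‖u n‖ = O(n σ ^ n)` with
`σ = max ‖r₁‖ ‖r₂‖ < 1`.
-/

open Filter Topology ComplexConjugate

theorem tendsto_zero_of_recurrence_of_norm_roots_lt_one {𝕜 : Type*} [NormedField 𝕜]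
    {r₁ r₂ : 𝕜} (h₁ : ‖r₁‖ < 1) (h₂ : ‖r₂‖ < 1) {u : ℕ → 𝕜}
    (hu : ∀ n, u (n + 2) = (r₁ + r₂) * u (n + 1) - r₁ * r₂ * u n) :
    Tendsto u atTop (𝓝 0) := by
  set σ := max ‖r₁‖ ‖r₂‖
  set w := u 1 - r₂ * u 0
  have hσ₀ : 0 ≤ σ := (norm_nonneg _).trans (le_max_left _ _)
  have hσ₁ : σ < 1 := max_lt h₁ h₂
  have hw : ∀ n, u (n + 1) = r₂ * u n + r₁ ^ n * w := by
    intro n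
    induction n with
    | zero => simp [w]
    | succ n ih => rw [hu, pow_succ, ih]; ring
  have hbound : ∀ n, ‖u (n + 1)‖ ≤ σ ^ (n + 1) * ‖u 0‖ + (n + 1) * σ ^ n * ‖w‖ := by
    intro n
    induction n with
    | zero =>
      calc ‖u (0 + 1)‖ ≤ ‖r₂‖ * ‖u 0‖ + ‖w‖ := by
            rw [hw, pow_zero, one_mul, ← norm_mul]; exact norm_add_le _ _
        _ ≤ σ ^ (0 + 1) * ‖u 0‖ + ((0 : ℕ) + 1) * σ ^ 0 * ‖w‖ := by
            simp only [zero_add, pow_one, pow_zero, Nat.cast_zero, one_mul]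
            gcongr
            exact le_max_right _ _
    | succ n ih =>
      calc ‖u (n + 1 + 1)‖ ≤ ‖r₂‖ * ‖u (n + 1)‖ + ‖r₁‖ ^ (n + 1) * ‖w‖ := by
            rw [hw, ← norm_pow, ← norm_mul, ← norm_mul]; exact norm_add_le _ _
        _ ≤ σ * (σ ^ (n + 1) * ‖u 0‖ + (n + 1) * σ ^ n * ‖w‖) + σ ^ (n + 1) * ‖w‖ := by
            gcongr
            exacts [le_max_right _ _, le_max_left _ _]
        _ = σ ^ (n + 1 + 1) * ‖u 0‖ + ((n + 1 : ℕ) + 1) * σ ^ (n + 1) * ‖w‖ := by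
            push_cast; ring
  have hlim : Tendsto (fun n : ℕ => σ ^ (n + 1) * ‖u 0‖ + (n + 1) * σ ^ n * ‖w‖)
      atTop (𝓝 0) := by
    have hpow := tendsto_pow_atTop_nhds_zero_of_lt_one hσ₀ hσ₁
    have hlin := tendsto_self_mul_const_pow_of_lt_one hσ₀ hσ₁
    simpa [add_mul] using
      (((tendsto_add_atTop_iff_nat 1).mpr hpow).mul_const ‖u 0‖).add
        ((hlin.add hpow).mul_const ‖w‖)
  exact (tendsto_add_atTop_iff_nat 1).mp (squeeze_zero_norm hbound hlim)

theorem exists_real_roots_abs_lt_one {t b : ℝ} (hb : b < 1) (ht : |t| < 1 + b)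
    (hD : 0 ≤ t ^ 2 - 4 * b) :
    ∃ r₁ r₂ : ℝ, r₁ + r₂ = t ∧ r₁ * r₂ = b ∧ |r₁| < 1 ∧ |r₂| < 1 := by
  obtain ⟨ht₁, ht₂⟩ := abs_lt.mp ht
  set s := √(t ^ 2 - 4 * b)
  have hs₀ : 0 ≤ s := Real.sqrt_nonneg _
  have hs₂ : s ^ 2 = t ^ 2 - 4 * b := Real.sq_sqrt hD
  -- `s < 2 ∓ t` amounts to `t ^ 2 - 4 * b < (2 ∓ t) ^ 2`, i.e. `± t < 1 + b`
  have hs : s < 2 - t ∧ s < 2 + t := by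
    constructor <;> nlinarith
  refine ⟨(t + s) / 2, (t - s) / 2, by ring, by linear_combination -hs₂ / 4, ?_, ?_⟩ <;>
    rw [abs_lt] <;> constructor <;> linarith

theorem exists_conj_roots_norm_lt_one {t b : ℝ} (hb : b < 1) (hD : t ^ 2 - 4 * b < 0) :
    ∃ r : ℂ, r + conj r = t ∧ r * conj r = b ∧ ‖r‖ < 1 := by
  set s := √(4 * b - t ^ 2)
  have hs₂ : s ^ 2 = 4 * b - t ^ 2 := Real.sq_sqrt (by linarith)
  have hnormSq : Complex.normSq ⟨t / 2, s / 2⟩ = b := by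
    rw [Complex.normSq_mk]; linear_combination hs₂ / 4
  refine ⟨⟨t / 2, s / 2⟩, ?_, ?_, ?_⟩
  · apply Complex.ext <;> simp
  · rw [Complex.mul_conj, hnormSq]
  · rw [← sq_lt_one_iff₀ (norm_nonneg _), ← Complex.normSq_eq_norm_sq, hnormSq]
    exact hb

theorem exists_roots_norm_lt_one {t b : ℝ} (hb : b < 1) (ht : |t| < 1 + b) :
    ∃ r₁ r₂ : ℂ, r₁ + r₂ = t ∧ r₁ * r₂ = b ∧ ‖r₁‖ < 1 ∧ ‖r₂‖ < 1 := by
  rcases le_or_gt 0 (t ^ 2 - 4 * b) with hD | hD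
  · obtain ⟨r₁, r₂, hsum, hprod, h₁, h₂⟩ := exists_real_roots_abs_lt_one hb ht hD
    exact ⟨r₁, r₂, by exact_mod_cast hsum, by exact_mod_cast hprod, by simpa, by simpa⟩
  · obtain ⟨r, hsum, hprod, hr⟩ := exists_conj_roots_norm_lt_one hb hD
    exact ⟨r, conj r, hsum, hprod, hr, by rwa [Complex.norm_conj]⟩

theorem tendsto_zero_of_recurrence_of_abs_lt_one_add {t b : ℝ} (hb : b < 1)
    (ht : |t| < 1 + b) {u : ℕ → ℝ} (hu : ∀ n, u (n + 2) = t * u (n + 1) - b * u n) :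
    Tendsto u atTop (𝓝 0) := by
  obtain ⟨r₁, r₂, hsum, hprod, h₁, h₂⟩ := exists_roots_norm_lt_one hb ht
  have hu' : Tendsto (fun n => (u n : ℂ)) atTop (𝓝 0) :=
    tendsto_zero_of_recurrence_of_norm_roots_lt_one h₁ h₂ fun n => by
      rw [hsum, hprod, hu]; push_cast; ring
  simpa [Function.comp_def] using (Complex.continuous_re.tendsto 0).comp hu'

theorem polyak_params_jury_stable {a m x : ℝ} (ha : 0 < a) (hm : 0 < m) (hx₀ : 0 < x)
    (hx : x < a ^ 2 + m ^ 2) :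
    ((a - m) / (a + m)) ^ 2 < 1 ∧
      |1 + ((a - m) / (a + m)) ^ 2 - 4 / (a + m) ^ 2 * x| < 1 + ((a - m) / (a + m)) ^ 2 := by
  have hS : 0 < (a + m) ^ 2 := by positivity
  have h1β : 1 + ((a - m) / (a + m)) ^ 2 = ((a + m) ^ 2 + (a - m) ^ 2) / (a + m) ^ 2 := by
    field_simp
  have ht : 1 + ((a - m) / (a + m)) ^ 2 - 4 / (a + m) ^ 2 * x
      = ((a + m) ^ 2 + (a - m) ^ 2 - 4 * x) / (a + m) ^ 2 := by
    field_simp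
  refine ⟨?_, ?_⟩
  · rw [div_pow, div_lt_one hS]; nlinarith
  · rw [ht, h1β, abs_div, abs_of_pos hS, div_lt_div_iff_of_pos_right hS, abs_lt]
    constructor <;> nlinarith

theorem heavy_ball_q_tendsto_inv_general
    (μ L x : ℝ) (hμ : 0 < μ)
    (α β : ℝ)
    (hα : α = 4 / (Real.sqrt L + Real.sqrt μ) ^ 2)
    (hβ : β = ((Real.sqrt L - Real.sqrt μ) / (Real.sqrt L + Real.sqrt μ)) ^ 2)
    (hx0 : 0 < x) (hxL : x ≤ L) (q : ℕ → ℝ)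
    (hrec : ∀ k : ℕ, 1 ≤ k →
      q (k + 1) = q k + α * (1 - x * q k) + β * (q k - q (k - 1))) :
    Filter.Tendsto q Filter.atTop (nhds (1 / x)) := by
  have hL : 0 < L := hx0.trans_le hxL
  obtain ⟨hβ₁, ht⟩ : β < 1 ∧ |1 + β - α * x| < 1 + β := by
    subst hα hβ
    exact polyak_params_jury_stable (Real.sqrt_pos.mpr hL) (Real.sqrt_pos.mpr hμ) hx0
      (by rw [Real.sq_sqrt hL.le, Real.sq_sqrt hμ.le]; linarith)
  have hres : Tendsto (fun k => 1 - x * q k) atTop (𝓝 0) :=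
    tendsto_zero_of_recurrence_of_abs_lt_one_add hβ₁ ht fun n => by
      rw [hrec (n + 1) (Nat.le_add_left 1 n), Nat.add_sub_cancel]; ring
  have hq : Tendsto (fun k => (1 - (1 - x * q k)) / x) atTop (𝓝 ((1 - 0) / x)) :=
    (tendsto_const_nhds.sub hres).div_const x
  simpa [mul_div_cancel_left₀ _ hx0.ne'] using hq

/-- The scalar three-term recurrence associated with the heavy ball method with Polyak's
parameters, evaluated at a point `x ∈ (0, L]`, converges to `1/x` for any initial values. -/
theorem heavy_ball_q_tendsto_inv
    (μ L x : ℝ) (hμ : 0 < μ) (hμL : μ ≤ L)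
    (α β : ℝ)
    (hα : α = 4 / (Real.sqrt L + Real.sqrt μ) ^ 2)
    (hβ : β = ((Real.sqrt L - Real.sqrt μ) / (Real.sqrt L + Real.sqrt μ)) ^ 2)
    (hx0 : 0 < x) (hxL : x ≤ L) (q : ℕ → ℝ)
    (hrec : ∀ k : ℕ, 1 ≤ k →
      q (k + 1) = q k + α * (1 - x * q k) + β * (q k - q (k - 1))) :
    Filter.Tendsto q Filter.atTop (nhds (1 / x)) :=
  heavy_ball_q_tendsto_inv_general μ L x hμ α β hα hβ hx0 hxL q hrec
end

section
/- Let 0 < μ ≤ λ ≤ L and set β = (√L − √μ)/(√L + √μ). Define real sequences (a_k) and (b_k) by a₀ = 1, b₀ = 1, and for k ≥ 1: b_k = (1 − λ/L)·a_{k−1} and a_k = (1 + β)·b_k − β·b_{k−1}. Then for every k ≥ 0, b_k² ≤ 2·(1 − √(μ/L))ᵏ. -/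
/-!
Put `t = √(μ/L)` and `q = 1 - λ/L`, so that `0 ≤ q ≤ 1 - t²` and `β = (1 - t)/(1 + t)`.
Eliminating `a`, the errors satisfy `(1 + t) b_{k+2} = q (2 b_{k+1} - (1 - t) b_k)`, and along this
recurrence the energy `E(X, Y) = (1 - q) Y² + (Y - (1 - t) X)²` of consecutive pairs contracts by
the factor `1 - t`: `(1 + t)² ((1 - t) E(X, Y) - E(Y, Z))` is an explicit sum of nonnegative terms.
Since `b₁ = q` is what one more step from the pair `(1, 1)` would give, `E(b_k, b_{k+1})` is at most
`(1 - t)^{k+1} E(1, 1) = (1 - t)^{k+1} (1 - q + t²) ≤ 2 (1 - q) (1 - t)^{k+1}`, while it is at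
least `(1 - q) b_{k+1}²`.
-/

def nesterovEnergy (t q X Y : ℝ) : ℝ := (1 - q) * Y ^ 2 + (Y - (1 - t) * X) ^ 2

section

variable {t q : ℝ}

theorem nesterovEnergy_step (ht : 0 ≤ t) (hq : 0 ≤ q) (hqt : q ≤ 1 - t ^ 2) {X Y Z : ℝ}
    (hZ : (1 + t) * Z = q * (2 * Y - (1 - t) * X)) :
    nesterovEnergy t q Y Z ≤ (1 - t) * nesterovEnergy t q X Y := by
  set W := 2 * Y - (1 - t) * X
  have hs : 0 ≤ 1 - q - t ^ 2 := by linarith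
  have ht1 : 0 ≤ 1 - t := by nlinarith
  have hsos : (1 + t) ^ 2 * ((1 - t) * nesterovEnergy t q X Y - nesterovEnergy t q Y Z)
      = q * (1 - q) ^ 2 * W ^ 2 + (1 - t) * (1 - q - t ^ 2) * ((1 + t) * Y - W) ^ 2
        + t * (1 - q - t ^ 2) * W ^ 2
        + t * (1 - t ^ 2) * ((1 + t) * (Y - (1 - t) * X) - t * W) ^ 2 := by
    unfold nesterovEnergy
    linear_combination (2 * (1 - t ^ 2) * Y - (2 - q) * ((1 + t) * Z + q * W)) * hZ
  have h1t2 : 0 ≤ 1 - t ^ 2 := by nlinarith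
  rw [← sub_nonneg, ← mul_nonneg_iff_of_pos_left (by positivity : (0 : ℝ) < (1 + t) ^ 2), hsos]
  have := mul_nonneg (mul_nonneg hq (sq_nonneg (1 - q))) (sq_nonneg W)
  have := mul_nonneg (mul_nonneg ht1 hs) (sq_nonneg ((1 + t) * Y - W))
  have := mul_nonneg (mul_nonneg ht hs) (sq_nonneg W)
  have := mul_nonneg (mul_nonneg ht h1t2) (sq_nonneg ((1 + t) * (Y - (1 - t) * X) - t * W))
  linarith

theorem nesterovEnergy_le_pow (ht : 0 ≤ t) (hq : 0 ≤ q) (hqt : q ≤ 1 - t ^ 2) {x : ℕ → ℝ}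
    (hx : ∀ k, (1 + t) * x (k + 2) = q * (2 * x (k + 1) - (1 - t) * x k)) (k : ℕ) :
    nesterovEnergy t q (x k) (x (k + 1)) ≤ (1 - t) ^ k * nesterovEnergy t q (x 0) (x 1) := by
  induction k with
  | zero => simp
  | succ k ih =>
    have ht1 : 0 ≤ 1 - t := by nlinarith
    calc nesterovEnergy t q (x (k + 1)) (x (k + 2))
        ≤ (1 - t) * nesterovEnergy t q (x k) (x (k + 1)) := nesterovEnergy_step ht hq hqt (hx k)
      _ ≤ (1 - t) * ((1 - t) ^ k * nesterovEnergy t q (x 0) (x 1)) := by gcongr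
      _ = (1 - t) ^ (k + 1) * nesterovEnergy t q (x 0) (x 1) := by ring

theorem sq_le_of_nesterovEnergy_le (ht : 0 < t) (hqt : q ≤ 1 - t ^ 2) {c X Y : ℝ} (hc : 0 ≤ c)
    (hE : nesterovEnergy t q X Y ≤ c * nesterovEnergy t q 1 1) : Y ^ 2 ≤ 2 * c := by
  have hq1 : 0 < 1 - q := by nlinarith
  have hE11 : nesterovEnergy t q 1 1 ≤ 2 * (1 - q) := by
    unfold nesterovEnergy; nlinarith
  have : (1 - q) * Y ^ 2 ≤ (1 - q) * (2 * c) := by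
    calc (1 - q) * Y ^ 2 ≤ nesterovEnergy t q X Y := by
          unfold nesterovEnergy; nlinarith [sq_nonneg (Y - (1 - t) * X)]
      _ ≤ c * (2 * (1 - q)) := hE.trans (by gcongr)
      _ = (1 - q) * (2 * c) := by ring
  exact le_of_mul_le_mul_left this hq1

end

theorem nesterov_momentum_eq {μ L : ℝ} (hμ : 0 ≤ μ) (hL : 0 < L) :
    (Real.sqrt L - Real.sqrt μ) / (Real.sqrt L + Real.sqrt μ)
      = (1 - Real.sqrt (μ / L)) / (1 + Real.sqrt (μ / L)) := by
  have hsL : 0 < Real.sqrt L := Real.sqrt_pos.2 hL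
  rw [Real.sqrt_div hμ]
  field_simp

/-- Scalar error factors of Nesterov's constant-momentum method applied to the quadratic
`f(t) = (λ/2) t²` with `0 < μ ≤ λ ≤ L`, started from `x⁰ = y⁰ = 1`: the gradient-step
errors satisfy `b k ^ 2 ≤ 2 (1 - √(μ/L))^k`. -/
theorem nesterov_scalar_error_bound
    (μ lam L : ℝ) (hμ : 0 < μ) (hμlam : μ ≤ lam) (hlamL : lam ≤ L)
    (β : ℝ) (hβ : β = (Real.sqrt L - Real.sqrt μ) / (Real.sqrt L + Real.sqrt μ))
    (a b : ℕ → ℝ) (ha0 : a 0 = 1) (hb0 : b 0 = 1)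
    (hb : ∀ k : ℕ, b (k + 1) = (1 - lam / L) * a k)
    (ha : ∀ k : ℕ, a (k + 1) = (1 + β) * b (k + 1) - β * b k) :
    ∀ k : ℕ, (b k) ^ 2 ≤ 2 * (1 - Real.sqrt (μ / L)) ^ k := by
  have hL : 0 < L := hμ.trans_le (hμlam.trans hlamL)
  set t := Real.sqrt (μ / L)
  set q := 1 - lam / L
  have ht : 0 < t := Real.sqrt_pos.2 (div_pos hμ hL)
  have hq : 0 ≤ q := sub_nonneg.2 ((div_le_one hL).2 hlamL)
  have hqt : q ≤ 1 - t ^ 2 := by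
    rw [Real.sq_sqrt (div_pos hμ hL).le]
    linarith [div_le_div_of_nonneg_right hμlam hL.le]
  have ht1 : 0 ≤ 1 - t := by nlinarith
  have hβt : β = (1 - t) / (1 + t) := hβ.trans (nesterov_momentum_eq hμ.le hL)
  have hrec : ∀ k, (1 + t) * b (k + 2) = q * (2 * b (k + 1) - (1 - t) * b k) := by
    intro k
    rw [hb (k + 1), ha k, hβt]
    field_simp
    ring
  have hstart : nesterovEnergy t q (b 0) (b 1) ≤ (1 - t) * nesterovEnergy t q 1 1 := by
    rw [hb0]
    exact nesterovEnergy_step ht.le hq hqt (by rw [hb 0, ha0]; ring)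
  rintro (_ | k)
  · norm_num [hb0]
  · refine sq_le_of_nesterovEnergy_le ht hqt (X := b k) (pow_nonneg ht1 _) ?_
    calc nesterovEnergy t q (b k) (b (k + 1))
        ≤ (1 - t) ^ k * nesterovEnergy t q (b 0) (b 1) := nesterovEnergy_le_pow ht.le hq hqt hrec k
      _ ≤ (1 - t) ^ (k + 1) * nesterovEnergy t q 1 1 := by
        rw [pow_succ, mul_assoc]
        gcongr
end

section
/- For every real number κ ≥ 1 there exist a real number δ with 0 ≤ δ < 1 and a natural number k ≥ 1 such that 2(1 − √(1 − δ))ᵏ < 1 and (1 − δ)·κ + κ · (1 − δ)·√(2(1 − √(1 − δ))ᵏ) / (1 − √(2(1 − √(1 − δ))ᵏ)) ≤ 1. -/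
/-!
Take `1 - δ = 1 / (2κ)`. Since `a + a r / (1 - r) = a / (1 - r)`, the second condition reads
`κ (1 - δ) ≤ 1 - √(2 qᵏ)` with `q = 1 - √(1 - δ) ∈ [0, 1)`, i.e. `√(2 qᵏ) ≤ 1/2`, which holds
for all large `k` because `qᵏ → 0`.
-/

lemma exists_pos_pow_lt_of_lt_one {q ε : ℝ} (hε : 0 < ε) (hq₀ : 0 ≤ q) (hq₁ : q < 1) :
    ∃ k : ℕ, 1 ≤ k ∧ q ^ k < ε :=
  ((Filter.eventually_ge_atTop 1).and
    ((tendsto_pow_atTop_nhds_zero_of_lt_one hq₀ hq₁).eventually (gt_mem_nhds hε))).exists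

lemma add_mul_div_one_sub_le_one {a r : ℝ} (hr : r < 1) (h : a ≤ 1 - r) :
    a + a * r / (1 - r) ≤ 1 := by
  have hpos : 0 < 1 - r := sub_pos.mpr hr
  calc a + a * r / (1 - r) = a / (1 - r) := by field_simp; ring
    _ ≤ 1 := (div_le_one hpos).mpr h

/-- Existence of admissible parameters `δ ∈ [0,1)` and `k ≥ 1` in the uniform convergence
theorem for the Nesterov-accelerated multigrid cycle (N-cycle), for any two-grid condition
number `κ ≥ 1`. -/
theorem ncycle_admissible_parameters_exist
    (κ : ℝ) (hκ : 1 ≤ κ) :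
    ∃ (δ : ℝ) (k : ℕ), 0 ≤ δ ∧ δ < 1 ∧ 1 ≤ k ∧
      2 * (1 - Real.sqrt (1 - δ)) ^ k < 1 ∧
      (1 - δ) * κ +
          κ * (1 - δ) * Real.sqrt (2 * (1 - Real.sqrt (1 - δ)) ^ k) /
            (1 - Real.sqrt (2 * (1 - Real.sqrt (1 - δ)) ^ k)) ≤ 1 := by
  have hκ₀ : 0 < κ := zero_lt_one.trans_le hκ
  set ε : ℝ := 1 / (2 * κ) with hε
  have hε₀ : 0 < ε := by positivity
  have hε₁ : ε ≤ 1 := by rw [hε, div_le_one (by positivity)]; linarith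
  have hsqrt_ε : 0 < Real.sqrt ε := Real.sqrt_pos.mpr hε₀
  obtain ⟨k, hk, hqk⟩ := exists_pos_pow_lt_of_lt_one (ε := 1 / 8)
    (q := 1 - Real.sqrt ε) (by norm_num) (by linarith [Real.sqrt_le_one.mpr hε₁]) (by linarith)
  refine ⟨1 - ε, k, by linarith, by linarith, hk, ?_, ?_⟩ <;> rw [sub_sub_cancel]
  · linarith
  · have hsqrt_t : Real.sqrt (2 * (1 - Real.sqrt ε) ^ k) < 1 / 2 :=
      (Real.sqrt_lt' (by norm_num)).mpr (by linarith)
    have hκε : κ * ε = 1 / 2 := by rw [hε]; field_simp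
    rw [mul_comm ε κ, hκε]
    exact add_mul_div_one_sub_le_one (by linarith) (by linarith)
end

section
/- Let A and B be real symmetric positive definite n×n matrices, let 0 < m ≤ 1, and suppose every real eigenvalue of BA lies in the interval [m, 1]. Let p ∈ ℝ[X] and ρ ∈ [0, 1) satisfy 0 ≤ p(x) ≤ ρ for all x ∈ [m, 1]. Define the matrix B̂ := (I − p(BA))·A⁻¹. Then every real eigenvalue of B̂A lies in the interval [1 − ρ, 1]. -/
/-!
Over `ℝ` the spectral mapping `σ(p(M)) = p(σ(M))` fails in general, but it holds for self-adjoint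
`M` through the continuous functional calculus. Conjugating by the unit `B^{1/2}` turns `BA` into the
Hermitian matrix `B^{1/2} A B^{1/2}` and leaves both `σ(BA)` and `σ(p(BA))` unchanged, so
`σ(p(BA)) = p(σ(BA))`. Since `B̂A = (1 - p)(BA)`, every eigenvalue of `B̂A` is `1 - p(s)` with
`s ∈ [m, 1]`, hence lies in `[1 - ρ, 1]`.
-/

open Matrix Polynomial
open scoped ComplexOrder

theorem Polynomial.aeval_units_conj {R A : Type*} [CommSemiring R] [Semiring A] [Algebra R A]
    (u : Aˣ) (x : A) (p : R[X]) :
    aeval (↑u * x * ↑u⁻¹ : A) p = ↑u * aeval x p * ↑u⁻¹ := by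
  induction p using Polynomial.induction_on' with
  | add p q hp hq => simp only [map_add, hp, hq, mul_add, add_mul]
  | monomial k a =>
    rw [aeval_monomial, aeval_monomial, Units.conj_pow, ← mul_assoc, ← mul_assoc,
      Algebra.commutes a (u : A), mul_assoc (u : A)]

theorem spectrum.aeval_units_conjugate {R A : Type*} [CommSemiring R] [Ring A] [Algebra R A]
    (u : Aˣ) (x : A) (p : R[X]) :
    spectrum R (aeval (↑u * x * ↑u⁻¹ : A) p) = spectrum R (aeval x p) := by
  rw [aeval_units_conj, spectrum.units_conjugate]

theorem IsSelfAdjoint.spectrum_aeval {A : Type*} [Ring A] [StarRing A] [TopologicalSpace A]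
    [Algebra ℝ A] [ContinuousFunctionalCalculus ℝ A IsSelfAdjoint] {a : A}
    (ha : IsSelfAdjoint a) (p : ℝ[X]) :
    spectrum ℝ (aeval a p) = (fun x ↦ p.eval x) '' spectrum ℝ a := by
  rw [← cfc_polynomial p a ha, cfc_map_spectrum _ a ha p.continuous.continuousOn]

open scoped MatrixOrder in
theorem Matrix.PosDef.exists_units_conj_isHermitian {𝕜 n : Type*} [RCLike 𝕜] [Fintype n]
    [DecidableEq n] {A B : Matrix n n 𝕜} (hB : B.PosDef) (hA : A.IsHermitian) :
    ∃ (u : (Matrix n n 𝕜)ˣ) (M : Matrix n n 𝕜),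
      M.IsHermitian ∧ B * A = (u : Matrix n n 𝕜) * M * (↑u⁻¹ : Matrix n n 𝕜) := by
  obtain ⟨u, hu⟩ : IsUnit (CFC.sqrt B) :=
    CFC.isUnit_sqrt_iff_isStrictlyPositive.mpr hB.isStrictlyPositive
  have hS : (CFC.sqrt B).IsHermitian := (CFC.sqrt_nonneg B).posSemidef.1
  refine ⟨u, CFC.sqrt B * A * CFC.sqrt B, ?_, ?_⟩
  · rw [IsHermitian, conjTranspose_mul, conjTranspose_mul, hS.eq, hA.eq, mul_assoc]
  · calc B * A = CFC.sqrt B * CFC.sqrt B * A * (u * ↑u⁻¹ : Matrix n n 𝕜) := by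
          rw [CFC.sqrt_mul_sqrt_self B hB.posSemidef.nonneg, Units.mul_inv, mul_one]
      _ = ↑u * (CFC.sqrt B * A * CFC.sqrt B) * (↑u⁻¹ : Matrix n n 𝕜) := by
          simp only [hu, mul_assoc]

theorem Matrix.PosDef.spectrum_aeval_mul {𝕜 n : Type*} [RCLike 𝕜] [Fintype n]
    [DecidableEq n] {A B : Matrix n n 𝕜} (hB : B.PosDef) (hA : A.IsHermitian) (p : ℝ[X]) :
    spectrum ℝ (aeval (B * A) p) = (fun x ↦ p.eval x) '' spectrum ℝ (B * A) := by
  obtain ⟨u, M, hM, hBA⟩ := hB.exists_units_conj_isHermitian hA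
  rw [hBA, spectrum.aeval_units_conjugate, spectrum.units_conjugate,
    hM.isSelfAdjoint.spectrum_aeval]

theorem accelerated_coarse_solver_spectrum_general
    (n : ℕ) (A B : Matrix (Fin n) (Fin n) ℝ) (hA : A.PosDef) (hB : B.PosDef)
    (m : ℝ)
    (hspec : ∀ t ∈ spectrum ℝ (B * A), t ∈ Set.Icc m 1)
    (p : Polynomial ℝ) (ρ : ℝ)
    (hp : ∀ t ∈ Set.Icc m 1, 0 ≤ p.eval t ∧ p.eval t ≤ ρ)
    (Bhat : Matrix (Fin n) (Fin n) ℝ)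
    (hBhat : Bhat = (1 - aeval (B * A) p) * A⁻¹) :
    ∀ t ∈ spectrum ℝ (Bhat * A), t ∈ Set.Icc (1 - ρ) 1 := by
  have hBhatA : Bhat * A = aeval (B * A) (1 - p) := by
    rw [hBhat, mul_assoc, nonsing_inv_mul A ((isUnit_iff_isUnit_det A).mp hA.isUnit), mul_one,
      map_sub, map_one]
  intro t ht
  rw [hBhatA, hB.spectrum_aeval_mul hA.isHermitian] at ht
  obtain ⟨s, hs, rfl⟩ := ht
  obtain ⟨hps_nonneg, hps_le⟩ := hp s (hspec s hs)
  simp only [eval_sub, eval_one, Set.mem_Icc]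
  constructor <;> linarith

/-- Eigenvalue localization for the polynomially accelerated coarse-level solver:
if every real eigenvalue of `B * A` lies in `[m, 1]` and `0 ≤ p ≤ ρ < 1` on `[m, 1]`,
then every real eigenvalue of `B̂ * A`, where `B̂ = (I - p(BA)) A⁻¹`, lies in `[1-ρ, 1]`. -/
theorem accelerated_coarse_solver_spectrum
    (n : ℕ) (A B : Matrix (Fin n) (Fin n) ℝ) (hA : A.PosDef) (hB : B.PosDef)
    (m : ℝ) (hm0 : 0 < m) (hm1 : m ≤ 1)
    (hspec : ∀ t ∈ spectrum ℝ (B * A), t ∈ Set.Icc m 1)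
    (p : Polynomial ℝ) (ρ : ℝ) (hρ0 : 0 ≤ ρ) (hρ1 : ρ < 1)
    (hp : ∀ t ∈ Set.Icc m 1, 0 ≤ p.eval t ∧ p.eval t ≤ ρ)
    (Bhat : Matrix (Fin n) (Fin n) ℝ)
    (hBhat : Bhat = (1 - aeval (B * A) p) * A⁻¹) :
    ∀ t ∈ spectrum ℝ (Bhat * A), t ∈ Set.Icc (1 - ρ) 1 :=
  accelerated_coarse_solver_spectrum_general n A B hA hB m hspec p ρ hp Bhat hBhat
end
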